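/- arXiv:2504.14153 — 7 statements merged into one kernel-verified Lean document; each statement's English description precedes it below -/
import Mathlib

section
/- A commutative ring R is spanned by units if and only if there exists a family (Rᵢ)_{i ∈ I} of subrings of R with ⋃_{i ∈ I} Rᵢ = R such that for each i there are an integer c(i) ≥ 1 and a surjective ring homomorphism from the Laurent polynomial ring ℤ[T₁^{±1},…,T_{c(i)}^{±1}] onto Rᵢ. -/
universe u

/-- A commutative ring is *spanned by units* if every element is a finite
(possibly empty) sum of units. -/
def SpannedByUnits (R : Type*) [CommRing R] : Prop :=
  ∀ x : R, ∃ s : Multiset Rˣ, (s.map (fun u => (u : R))).sum = x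

/-!
The finite sums of units form the additive subgroup generated by the units, since the units are
closed under negation. Ring homomorphisms map this subgroup into its counterpart in the target,
and in a group ring `ℤ[G]` it is everything, because monomials are units. Conversely, units
`u₁, …, uₙ` of `R` lie in the image of the evaluation `ℤ[T₀^{±1}, …, Tₙ^{±1}] → R`, `T₀ ↦ 1`,
`Tₖ ↦ uₖ`, so these images cover `R` as soon as `R` is spanned by units.
-/

def unitSpan (R : Type*) [Ring R] : AddSubgroup R :=
  AddSubgroup.closure {x | IsUnit x}

section Ring

variable {R S : Type*} [Ring R] [Ring S]

lemma unitSpan_toAddSubmonoid :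
    (unitSpan R).toAddSubmonoid = AddSubmonoid.closure {x | IsUnit x} := by
  have hneg : -{x : R | IsUnit x} = {x | IsUnit x} := by ext; simp
  rw [unitSpan, AddSubgroup.closure_toAddSubmonoid, hneg, Set.union_self]

lemma unitSpan_map_le (f : R →+* S) : (unitSpan R).map (f : R →+ S) ≤ unitSpan S := by
  rw [AddSubgroup.map_le_iff_le_comap, unitSpan, AddSubgroup.closure_le]
  exact fun _ hx => AddSubgroup.subset_closure (hx.map f)

lemma unitSpan_addMonoidAlgebra_eq_top (G : Type*) [AddGroup G] :
    unitSpan (AddMonoidAlgebra ℤ G) = ⊤ := by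
  refine (AddSubgroup.eq_top_iff' _).mpr fun x => ?_
  induction x using AddMonoidAlgebra.induction_on with
  | of g => exact AddSubgroup.subset_closure ((Group.isUnit (Multiplicative.ofAdd g)).map _)
  | add x y hx hy => exact add_mem hx hy
  | smul r x hx => exact zsmul_mem hx r

end Ring

lemma spannedByUnits_iff_unitSpan_eq_top (R : Type*) [CommRing R] :
    SpannedByUnits R ↔ unitSpan R = ⊤ := by
  -- the coercion `Multiset Rˣ → Multiset R` in `SpannedByUnits` goes through the multiset monad
  simp only [SpannedByUnits, AddSubgroup.eq_top_iff', ← AddSubgroup.mem_toAddSubmonoid,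
    unitSpan_toAddSubmonoid, Multiset.pure_def, Multiset.bind_def, Multiset.bind_singleton,
    Multiset.map_map, Function.comp_apply]
  refine forall_congr' fun x => ⟨?_, fun hx => ?_⟩
  · rintro ⟨s, rfl⟩
    exact multiset_sum_mem _ fun _ hy =>
      AddSubmonoid.subset_closure (Multiset.forall_mem_map_iff.mpr (fun u _ => u.isUnit) _ hy)
  · obtain ⟨s, hs, rfl⟩ := AddSubmonoid.exists_multiset_of_mem_closure hx
    lift s to Multiset Rˣ using hs
    exact ⟨s, rfl⟩

section Laurent

variable {R : Type*} [CommRing R] {σ : Type*}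

noncomputable def laurentEval (u : σ → Rˣ) : AddMonoidAlgebra ℤ (σ →₀ ℤ) →+* R :=
  AddMonoidAlgebra.lift ℤ R (σ →₀ ℤ)
    ((Units.coeHom R).comp (AddMonoidHom.toMultiplicativeLeft
      (Finsupp.liftAddHom fun i => zmultiplesHom _ (Additive.ofMul (u i)))))

lemma val_mem_range_laurentEval (u : σ → Rˣ) (i : σ) : (u i : R) ∈ (laurentEval u).range :=
  ⟨AddMonoidAlgebra.single (Finsupp.single i 1) 1, by simp [laurentEval]⟩

lemma sum_mem_range_laurentEval_cons (l : List Rˣ) :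
    (l.map Units.val).sum ∈ (laurentEval (Fin.cons 1 l.get : Fin (l.length + 1) → Rˣ)).range := by
  refine list_sum_mem fun _ hx => ?_
  obtain ⟨_, hu, rfl⟩ := List.mem_map.mp hx
  obtain ⟨i, rfl⟩ := List.mem_iff_get.mp hu
  simpa using val_mem_range_laurentEval (Fin.cons 1 l.get : Fin (l.length + 1) → Rˣ) i.succ

end Laurent

/-- A commutative ring `R` is spanned by units iff it is the union of a family of subrings
`Rᵢ`, each of which admits a surjective ring homomorphism from a Laurent polynomial ring
`ℤ[T₁^{±1}, …, T_{c(i)}^{±1}]` (with `c(i) ≥ 1` variables) onto it.  Here the Laurent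
polynomial ring in `c` variables is `AddMonoidAlgebra ℤ (Fin c →₀ ℤ)`. -/
theorem spannedByUnits_iff_union_of_laurent_quotients (R : Type u) [CommRing R] :
    SpannedByUnits R ↔
      ∃ (I : Type u) (Rs : I → Subring R) (c : I → ℕ),
        (⋃ i, (Rs i : Set R)) = Set.univ ∧
        ∀ i, 1 ≤ c i ∧
          ∃ f : AddMonoidAlgebra ℤ (Fin (c i) →₀ ℤ) →+* (Rs i),
            Function.Surjective f := by
  constructor
  · intro h
    refine ⟨List Rˣ, fun l => (laurentEval (Fin.cons 1 l.get : Fin (l.length + 1) → Rˣ)).range,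
      fun l => l.length + 1, Set.eq_univ_of_forall fun x => Set.mem_iUnion.mpr ?_,
      fun l => ⟨Nat.le_add_left 1 _, _, RingHom.rangeRestrict_surjective _⟩⟩
    obtain ⟨s, rfl⟩ := h x
    refine ⟨s.toList, ?_⟩
    simpa using sum_mem_range_laurentEval_cons s.toList
  · rintro ⟨I, Rs, c, hcover, hRs⟩
    rw [spannedByUnits_iff_unitSpan_eq_top, AddSubgroup.eq_top_iff']
    intro x
    obtain ⟨i, hxi⟩ := Set.mem_iUnion.mp (hcover ▸ Set.mem_univ x)
    obtain ⟨-, f, hf⟩ := hRs i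
    obtain ⟨p, hp⟩ := hf ⟨x, hxi⟩
    refine unitSpan_map_le ((Rs i).subtype.comp f) ⟨p, ?_, by simp [hp]⟩
    simp [unitSpan_addMonoidAlgebra_eq_top]
end

section
/- Let F be a field and R an integral domain that is a finitely generated F-algebra, and let 𝔪 ⊂ R be a maximal ideal. Then there exists an element s ∈ R with s ≠ 0 and s ∉ 𝔪 such that the localization R[1/s] away from s is spanned by units. -/
private lemma coe_sum_eq {A : Type*} [CommRing A] (s : Multiset Aˣ) :
    (s.map (fun u => (u : A))).sum = (s.map Units.val).sum := by
  congr 1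
  show Multiset.map id (s.bind fun a => {Units.val a}) = _
  rw [Multiset.map_id, Multiset.bind_singleton]

private lemma neg_sum_units {A : Type*} [CommRing A] (s : Multiset Aˣ) :
    (((s.map fun u => -u)).map Units.val).sum = -(s.map Units.val).sum := by
  induction s using Multiset.induction with
  | empty => simp
  | cons a s ih => simp only [Multiset.map_cons, Multiset.sum_cons, ih, Units.val_neg]; ring

/-- A product of two sums of units is a sum of units. -/
private lemma mul_sum_units {A : Type*} [CommRing A] (u v : Multiset Aˣ) :
    ∃ w : Multiset Aˣ,
      (w.map Units.val).sum = (u.map Units.val).sum * (v.map Units.val).sum := by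
  induction u using Multiset.induction with
  | empty => exact ⟨0, by simp⟩
  | cons a u ih =>
    obtain ⟨w', hw'⟩ := ih
    refine ⟨v.map (fun x => a * x) + w', ?_⟩
    rw [Multiset.map_add, Multiset.sum_add, Multiset.map_cons, Multiset.sum_cons, hw', add_mul,
      Multiset.map_map]
    congr 1
    simp [Function.comp_def, Multiset.sum_map_mul_left]

/-- If the subring generated by units is everything, the ring is spanned by units. -/
private lemma spannedByUnits_of_closure {A : Type*} [CommRing A]
    (h : ∀ x : A, x ∈ Subring.closure {x : A | IsUnit x}) : SpannedByUnits A := by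
  intro x
  suffices hh : ∃ s : Multiset Aˣ, (s.map Units.val).sum = x by
    obtain ⟨s, hs⟩ := hh
    exact ⟨s, by rw [coe_sum_eq]; exact hs⟩
  induction h x using Subring.closure_induction with
  | mem x hx => exact ⟨{hx.unit}, by simp⟩
  | zero => exact ⟨0, rfl⟩
  | one => exact ⟨{1}, by simp⟩
  | add x y hx hy px py =>
    obtain ⟨s, hs⟩ := px; obtain ⟨t, ht⟩ := py
    exact ⟨s + t, by rw [Multiset.map_add, Multiset.sum_add, hs, ht]⟩
  | neg x hx px =>
    obtain ⟨s, hs⟩ := px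
    exact ⟨s.map (fun u => -u), by rw [neg_sum_units, hs]⟩
  | mul x y hx hy px py =>
    obtain ⟨s, hs⟩ := px; obtain ⟨t, ht⟩ := py
    obtain ⟨w, hw⟩ := mul_sum_units s t
    exact ⟨w, by rw [hw, hs, ht]⟩

/-- Let `R` be an integral domain which is a finitely generated algebra over a field `F`,
and let `𝔪 ⊂ R` be a maximal ideal.  Then there is a nonzero `s ∈ R` with `s ∉ 𝔪` such that
the localization `R[1/s]` is spanned by units. -/
theorem exists_away_spannedByUnits (F : Type*) [Field F] (R : Type*) [CommRing R]
    [IsDomain R] [Algebra F R] [Algebra.FiniteType F R]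
    (m : Ideal R) (hm : m.IsMaximal) :
    ∃ s : R, s ≠ 0 ∧ s ∉ m ∧ SpannedByUnits (Localization.Away s) := by
  classical
  obtain ⟨t, ht⟩ := (inferInstance : Algebra.FiniteType F R).out
  -- adjust each generator so that it is nonzero and not in `m`
  set y : R → R := fun x => if x ∈ m then x - 1 else x with hy
  have hym : ∀ x, y x ∉ m := by
    intro x hx
    by_cases h : x ∈ m
    · simp only [hy, if_pos h] at hx
      exact hm.ne_top ((Ideal.eq_top_iff_one m).mpr (by simpa using m.sub_mem h hx))
    · simp only [hy, if_neg h] at hx; exact h hx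
  have hy0 : ∀ x, y x ≠ 0 := by
    intro x hx
    by_cases h : x ∈ m
    · simp only [hy, if_pos h, sub_eq_zero] at hx
      exact hm.ne_top ((Ideal.eq_top_iff_one m).mpr (hx ▸ h))
    · simp only [hy, if_neg h] at hx; exact h (hx ▸ m.zero_mem)
  set s : R := ∏ x ∈ t, y x with hs
  have hs0 : s ≠ 0 := Finset.prod_ne_zero_iff.mpr fun x _ => hy0 x
  have hsm : s ∉ m := by
    intro h
    haveI := hm.isPrime
    obtain ⟨x, -, hx⟩ := Ideal.IsPrime.prod_mem_iff.mp h
    exact hym x hx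
  refine ⟨s, hs0, hsm, ?_⟩
  set A := Localization.Away s
  set f := algebraMap R A with hf
  have hsu : IsUnit (f s) := IsLocalization.Away.algebraMap_isUnit s
  apply spannedByUnits_of_closure
  set T : Subring A := Subring.closure {x : A | IsUnit x} with hT
  have hunit : ∀ a : A, IsUnit a → a ∈ T := fun a ha => Subring.subset_closure ha
  -- every element of the image of `R` lies in `T`
  have himg : ∀ r : R, f r ∈ T := by
    intro r
    have hr : r ∈ Algebra.adjoin F (t : Set R) := ht ▸ Algebra.mem_top
    induction hr using Algebra.adjoin_induction with
    | mem x hx =>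
      have hyu : IsUnit (f (y x)) := by
        refine isUnit_of_dvd_unit (map_dvd f ?_) hsu
        exact Finset.dvd_prod_of_mem y hx
      by_cases h : x ∈ m
      · have hxy : y x = x - 1 := if_pos h
        have : f x = f (y x) + 1 := by rw [hxy, map_sub, map_one, sub_add_cancel]
        rw [this]
        exact T.add_mem (hunit _ hyu) T.one_mem
      · have hxy : y x = x := if_neg h
        rw [← hxy]; exact hunit _ hyu
    | algebraMap c =>
      by_cases hc : c = 0
      · simp only [hc, map_zero]; exact T.zero_mem
      · exact hunit _ (((isUnit_iff_ne_zero.mpr hc).map (algebraMap F R)).map f)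
    | add x y hx hy px py => rw [map_add]; exact T.add_mem px py
    | mul x y hx hy px py => rw [map_mul]; exact T.mul_mem px py
  intro a
  obtain ⟨n, r, hr⟩ := IsLocalization.Away.surj (S := A) s a
  have hun : IsUnit (f s ^ n) := hsu.pow n
  have : a = f r * ↑hun.unit⁻¹ := by
    rw [Units.eq_mul_inv_iff_mul_eq, IsUnit.unit_spec]
    exact hr
  rw [this]
  exact T.mul_mem (himg r) (hunit _ (hun.unit⁻¹).isUnit)
end

section
/- Let F be a field and X an integral affine scheme of finite type over F, and let x ∈ X be a closed point. Then there exists a dense affine open subset U ⊆ X containing x such that the ring of sections 𝒪_X(U) is spanned by units. -/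
/-!
Let `p` be the prime of `x` and `a₁, …, aₙ` generators of the `F`-algebra `Γ(X, ⊤)`. Replacing
each `aᵢ ∈ p` by `aᵢ - 1` gives `bᵢ ∉ p` with `aᵢ = bᵢ` or `aᵢ = bᵢ + 1`, so `g = ∏ bᵢ ∉ p` and
`x` lies in the basic open `D(g)`, which is dense as `X` is irreducible. In
`Γ(X, D(g)) = Γ(X, ⊤)[1/g]` every `bᵢ` is a unit, so the semiring generated by the units contains
the nonzero scalars, the `aᵢ` and `1/g`, hence everything.
-/

open AlgebraicGeometry CategoryTheory Opposite

universe u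

theorem spannedByUnits_iff_closure_isUnit_eq_top {R : Type*} [CommRing R] :
    SpannedByUnits R ↔ Subsemiring.closure {x : R | IsUnit x} = ⊤ := by
  -- the coercion in `SpannedByUnits` elaborates through the `Multiset` monad
  simp only [SpannedByUnits, Multiset.pure_def, Multiset.bind_def, Multiset.bind_singleton,
    Multiset.map_id']
  refine ⟨fun h => eq_top_iff.mpr fun x _ => ?_, fun h x => ?_⟩
  · obtain ⟨s, rfl⟩ := h x
    refine multiset_sum_mem _ fun y hy => ?_
    obtain ⟨u, -, rfl⟩ := Multiset.mem_map.mp hy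
    exact Subsemiring.subset_closure u.isUnit
  · have hx := Subsemiring.mem_closure_iff.mp (h ▸ Subsemiring.mem_top x)
    have hunits : (IsUnit.submonoid R : Set R) = {x | IsUnit x} :=
      Set.ext IsUnit.mem_submonoid_iff
    rw [← hunits, Submonoid.closure_eq, hunits] at hx
    obtain ⟨l, hl, rfl⟩ := AddSubmonoid.exists_multiset_of_mem_closure hx
    refine ⟨l.pmap (fun y hy => hy.unit) hl, ?_⟩
    simp only [Multiset.map_pmap, IsUnit.unit_spec, Multiset.pmap_eq_map, Multiset.map_id']

theorem RingHom.map_mem_closure_isUnit_of_adjoin_eq_top {K A B : Type*} [Field K] [CommRing A]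
    [Algebra K A] [CommRing B] (φ : A →+* B) {t : Set A} (ht : Algebra.adjoin K t = ⊤)
    (hφ : ∀ a ∈ t, φ a ∈ Subsemiring.closure {x : B | IsUnit x}) (a : A) :
    φ a ∈ Subsemiring.closure {x : B | IsUnit x} := by
  have hle : Subsemiring.closure (Set.range (algebraMap K A) ∪ t) ≤
      (Subsemiring.closure {x : B | IsUnit x}).comap φ := by
    refine Subsemiring.closure_le.mpr (Set.union_subset ?_ hφ)
    rintro _ ⟨c, rfl⟩
    rcases eq_or_ne c 0 with rfl | hc
    · simp
    · exact Subsemiring.subset_closure (((Units.mk0 c hc).isUnit.map _).map φ)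
  rw [← Algebra.adjoin_toSubsemiring, ht] at hle
  exact hle trivial

theorem IsLocalization.closure_isUnit_eq_top {R S : Type*} [CommRing R] [CommRing S] [Algebra R S]
    (M : Submonoid R) [IsLocalization M S]
    (h : ∀ r, algebraMap R S r ∈ Subsemiring.closure {x : S | IsUnit x}) :
    Subsemiring.closure {x : S | IsUnit x} = ⊤ := by
  refine eq_top_iff.mpr fun y _ => ?_
  obtain ⟨⟨r, m⟩, rfl⟩ := IsLocalization.mk'_surjective M y
  dsimp only
  rw [IsLocalization.mk'_eq_mul_mk'_one]
  refine mul_mem (h r) (Subsemiring.subset_closure (IsUnit.of_mul_eq_one (algebraMap R S m) ?_))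
  rw [IsLocalization.mk'_spec, map_one]

theorem Ideal.IsPrime.exists_notMem_and_eq_or_eq_add_one {R : Type*} [CommRing R] {p : Ideal R}
    (hp : p.IsPrime) (a : R) : ∃ b ∉ p, a = b ∨ a = b + 1 := by
  by_cases ha : a ∈ p
  · refine ⟨a - 1, fun h => hp.ne_top ((Ideal.eq_top_iff_one p).mpr ?_), Or.inr (by ring)⟩
    simpa using p.sub_mem ha h
  · exact ⟨a, ha, Or.inl rfl⟩

theorem exists_notMem_spannedByUnits_of_isLocalization_away (K : Type*) {R : Type*} [Field K]
    [CommRing R] [Algebra K R] [Algebra.FiniteType K R] (p : Ideal R) [hp : p.IsPrime] :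
    ∃ g ∉ p, ∀ (S : Type*) [CommRing S] [Algebra R S] [IsLocalization.Away g S],
      SpannedByUnits S := by
  obtain ⟨s, hs⟩ := Algebra.FiniteType.out (R := K) (A := R)
  choose b hbp hb using hp.exists_notMem_and_eq_or_eq_add_one
  refine ⟨∏ a ∈ s, b a, Submonoid.prod_mem p.primeCompl fun a _ => hbp a, fun S _ _ _ => ?_⟩
  have hunit (a) (ha : a ∈ s) : IsUnit (algebraMap R S (b a)) :=
    isUnit_of_dvd_unit (map_dvd _ (Finset.dvd_prod_of_mem b ha))
      (IsLocalization.Away.algebraMap_isUnit _)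
  refine spannedByUnits_iff_closure_isUnit_eq_top.mpr <|
    IsLocalization.closure_isUnit_eq_top (.powers (∏ a ∈ s, b a))
      ((algebraMap R S).map_mem_closure_isUnit_of_adjoin_eq_top hs fun a ha => ?_)
  rcases hb a with h | h <;> rw [h]
  · exact Subsemiring.subset_closure (hunit a ha)
  · rw [map_add, map_one]
    exact add_mem (Subsemiring.subset_closure (hunit a ha)) (one_mem _)

theorem exists_dense_affine_open_spannedByUnits_general
    (F : Type u) [Field F] (X : Scheme.{u}) (f : X ⟶ Spec (CommRingCat.of F))
    [IsIntegral X] [IsAffine X] [LocallyOfFiniteType f]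
    (x : X) :
    ∃ U : X.Opens, IsAffineOpen U ∧ Dense (U : Set X) ∧ x ∈ U ∧
      SpannedByUnits Γ(X, U) := by
  let φ : F →+* Γ(X, ⊤) := f.appTop.hom.comp (Scheme.ΓSpecIso (.of F)).inv.hom
  let := φ.toAlgebra
  have : Algebra.FiniteType F Γ(X, ⊤) :=
    ((HasRingHomProperty.iff_of_isAffine (P := @LocallyOfFiniteType)).mp ‹_›).comp
      (.of_surjective _ (Scheme.ΓSpecIso _).commRingCatIsoToRingEquiv.symm.surjective)
  -- a point of `Spec` is not syntactically a `PrimeSpectrum`, so instance search misses this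
  obtain ⟨g, hg, hS⟩ := exists_notMem_spannedByUnits_of_isLocalization_away F
    (X.toSpecΓ.base x).asIdeal (hp := PrimeSpectrum.isPrime _)
  have hx : x ∈ X.basicOpen g := by rwa [← Scheme.toSpecΓ_preimage_basicOpen]
  exact ⟨X.basicOpen g, (isAffineOpen_top X).basicOpen g, (X.basicOpen g).isOpen.dense ⟨x, hx⟩,
    hx, hS _⟩

/-- Let `X` be an integral affine scheme of finite type over a field `F`, and let `x ∈ X`
be a closed point.  Then there is a dense affine open `U ⊆ X` containing `x` such that
`𝒪_X(U)` is spanned by units. -/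
theorem exists_dense_affine_open_spannedByUnits
    (F : Type u) [Field F] (X : Scheme.{u}) (f : X ⟶ Spec (CommRingCat.of F))
    [IsIntegral X] [IsAffine X] [LocallyOfFiniteType f] [QuasiCompact f]
    (x : X) (hx : IsClosed ({x} : Set X)) :
    ∃ U : X.Opens, IsAffineOpen U ∧ Dense (U : Set X) ∧ x ∈ U ∧
      SpannedByUnits Γ(X, U) :=
  exists_dense_affine_open_spannedByUnits_general F X f x
end

section
/- Let F be a field and X an integral separated scheme of finite type over F. Then X admits a finite open cover X = U₁ ∪ ⋯ ∪ U_n such that each Uᵢ is an affine open and each coordinate ring 𝒪_X(Uᵢ) is spanned by units. -/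
/-! Around a point `x`, take an affine open `V` whose ring of sections `A` is generated over `F`
by `a₁, …, aₘ`. In the local ring at `x` each `aᵢ` or `aᵢ - 1` is a unit; call it `bᵢ` and put
`g = ∏ bᵢ`. Then `x ∈ D(g)`, and in `A_g = Γ(D(g))` every `bᵢ` is a unit, so each `aᵢ` is a unit
or a unit plus one. Sums of units form a subsemiring, which contains `F` (nonzero constants are
units), hence all of the image of `A`; every element of `A_g` is such an image times a unit.
Quasi-compactness then gives a finite cover. -/

open AlgebraicGeometry CategoryTheory Opposite

universe u

section UnitSums

variable {R : Type*} [CommRing R]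

variable (R) in
def unitSums : Subsemiring R := Subsemiring.closure (Set.range ((↑) : Rˣ → R))

theorem IsUnit.mem_unitSums {x : R} (hx : IsUnit x) : x ∈ unitSums R :=
  Subsemiring.subset_closure hx

theorem spannedByUnits_of_unitSums_eq_top (h : unitSums R = ⊤) : SpannedByUnits R := by
  intro x
  have hx : x ∈ AddSubmonoid.closure (Set.range ((↑) : Rˣ → R)) := by
    have := Subsemiring.mem_closure_iff.mp (h ▸ Subsemiring.mem_top x)
    rwa [show Set.range ((↑) : Rˣ → R) = MonoidHom.mrange (Units.coeHom R) from rfl,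
      Submonoid.closure_eq] at this
  obtain ⟨l, hl, rfl⟩ := AddSubmonoid.exists_multiset_of_mem_closure hx
  lift l to Multiset Rˣ using hl
  exact ⟨l, by simp⟩

theorem map_mem_unitSums_of_adjoin_eq_top {K A : Type*} [Field K] [CommRing A] [Algebra K A]
    (ψ : A →+* R) {s : Set A} (hs : Algebra.adjoin K s = ⊤) (hsR : ∀ a ∈ s, ψ a ∈ unitSums R)
    (a : A) : ψ a ∈ unitSums R := by
  induction hs ▸ Algebra.mem_top (x := a) using Algebra.adjoin_induction with
  | mem a ha => exact hsR a ha
  | algebraMap r =>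
    rcases eq_or_ne r 0 with rfl | hr
    · simp
    · exact (((isUnit_iff_ne_zero.mpr hr).map _).map ψ).mem_unitSums
  | add _ _ _ _ ha hb => rw [map_add]; exact add_mem ha hb
  | mul _ _ _ _ ha hb => rw [map_mul]; exact mul_mem ha hb

theorem spannedByUnits_of_isLocalization {K A : Type*} [Field K] [CommRing A] [Algebra K A]
    [Algebra A R] (M : Submonoid A) [IsLocalization M R] {s : Set A}
    (hs : Algebra.adjoin K s = ⊤)
    (hsR : ∀ a ∈ s, IsUnit (algebraMap A R a) ∨ IsUnit (algebraMap A R (a - 1))) :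
    SpannedByUnits R := by
  have image_mem : ∀ a, algebraMap A R a ∈ unitSums R := by
    refine map_mem_unitSums_of_adjoin_eq_top _ hs fun a ha => ?_
    rcases hsR a ha with h | h
    · exact h.mem_unitSums
    · rw [← sub_add_cancel a 1, map_add, map_one]
      exact add_mem h.mem_unitSums (one_mem _)
  refine spannedByUnits_of_unitSums_eq_top (eq_top_iff.mpr fun b _ => ?_)
  obtain ⟨⟨a, m⟩, rfl⟩ := IsLocalization.mk'_surjective M b
  dsimp only
  rw [IsLocalization.mk'_eq_mul_mk'_one]
  refine mul_mem (image_mem a) (IsUnit.mem_unitSums (.of_mul_eq_one_right (algebraMap A R m) ?_))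
  rw [IsLocalization.mk'_spec', map_one]

end UnitSums

theorem TopologicalSpace.Opens.exists_fin_cover_of_forall_mem {α : Type*} [TopologicalSpace α]
    [CompactSpace α] {P : Opens α → Prop} (h : ∀ x, ∃ U : Opens α, x ∈ U ∧ P U) :
    ∃ (n : ℕ) (U : Fin n → Opens α), (⨆ i, U i) = ⊤ ∧ ∀ i, P (U i) := by
  choose U hxU hPU using h
  obtain ⟨t, ht⟩ := CompactSpace.elim_nhds_subcover (fun x => (U x : Set α))
    fun x => (U x).isOpen.mem_nhds (hxU x)
  refine ⟨t.card, fun i => U (t.equivFin.symm i), ?_, fun i => hPU _⟩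
  rw [t.equivFin.symm.iSup_comp (g := fun x : t => U x), eq_top_iff]
  intro y _
  obtain ⟨x, hx, hy⟩ := Set.mem_iUnion₂.mp (ht.ge (Set.mem_univ y))
  exact Opens.mem_iSup.mpr ⟨⟨x, hx⟩, hy⟩

namespace AlgebraicGeometry.Scheme

variable (X : Scheme) {V : X.Opens} {x : X}

theorem mem_basicOpen_or_mem_basicOpen_sub_one (hx : x ∈ V) (a : Γ(X, V)) :
    x ∈ X.basicOpen a ∨ x ∈ X.basicOpen (a - 1) := by
  simp only [X.mem_basicOpen _ x hx, map_sub, map_one]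
  rw [← IsUnit.neg_iff (_ - 1), neg_sub]
  exact IsLocalRing.isUnit_or_isUnit_one_sub_self _

theorem exists_mem_basicOpen_forall_dvd (hx : x ∈ V) (s : Finset Γ(X, V)) :
    ∃ g : Γ(X, V), x ∈ X.basicOpen g ∧ ∀ a ∈ s, a ∣ g ∨ a - 1 ∣ g := by
  classical
  let b a : Γ(X, V) := if x ∈ X.basicOpen a then a else a - 1
  have hb a : x ∈ X.basicOpen (b a) := by
    unfold b
    split_ifs with h
    · exact h
    · exact (X.mem_basicOpen_or_mem_basicOpen_sub_one hx a).resolve_left h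
  refine ⟨∏ a ∈ s, b a, ?_, fun a ha => ?_⟩
  · refine Finset.prod_induction b (fun g => x ∈ X.basicOpen g) (fun g h hg hh => ?_) ?_
      fun a _ => hb a
    · rw [X.basicOpen_mul]
      exact ⟨hg, hh⟩
    · rwa [X.basicOpen_of_isUnit isUnit_one]
  · have := Finset.dvd_prod_of_mem b ha
    unfold b at this
    split_ifs at this
    · exact .inl this
    · exact .inr this

end AlgebraicGeometry.Scheme

theorem exists_affineOpen_nhds_spannedByUnits {F : Type u} [Field F] {X : Scheme.{u}}
    (f : X ⟶ Spec (CommRingCat.of F)) [LocallyOfFiniteType f] (x : X) :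
    ∃ W : X.Opens, x ∈ W ∧ IsAffineOpen W ∧ SpannedByUnits Γ(X, W) := by
  obtain ⟨_, ⟨V, hV, rfl⟩, hxV, -⟩ :=
    X.isBasis_affineOpens.exists_subset_of_mem_open (Set.mem_univ x) isOpen_univ
  let φ : F →+* Γ(X, V) := (f.appLE ⊤ V le_top).hom.comp (Scheme.ΓSpecIso (.of F)).inv.hom
  have hφ : φ.FiniteType := (f.finiteType_appLE (isAffineOpen_top _) hV le_top).comp <|
    .of_surjective _ (Scheme.ΓSpecIso (.of F)).commRingCatIsoToRingEquiv.symm.surjective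
  let := φ.toAlgebra
  obtain ⟨s, hs⟩ := hφ.out
  obtain ⟨g, hxg, hg⟩ := X.exists_mem_basicOpen_forall_dvd hxV s
  have := hV.isLocalization_basicOpen g
  refine ⟨X.basicOpen g, hxg, hV.basicOpen g, spannedByUnits_of_isLocalization (K := F)
    (.powers g) hs fun a ha => (hg a ha).imp ?_ ?_⟩ <;>
  exact fun hdvd => isUnit_of_dvd_unit (map_dvd _ hdvd) (IsLocalization.Away.algebraMap_isUnit g)

theorem exists_finite_affine_cover_spannedByUnits_general
    (F : Type u) [Field F] (X : Scheme.{u}) (f : X ⟶ Spec (CommRingCat.of F))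
    [LocallyOfFiniteType f] [QuasiCompact f] :
    ∃ (n : ℕ) (U : Fin n → X.Opens),
      (⨆ i, U i) = ⊤ ∧
      ∀ i, IsAffineOpen (U i) ∧ SpannedByUnits Γ(X, U i) := by
  have : CompactSpace X := (quasiCompact_iff_compactSpace f).mp inferInstance
  exact TopologicalSpace.Opens.exists_fin_cover_of_forall_mem
    (exists_affineOpen_nhds_spannedByUnits f)

/-- Let `X` be an integral separated scheme of finite type over a field `F`.  Then `X`
admits a finite open cover by affine opens `U₁, …, U_n` such that each coordinate ring
`𝒪_X(Uᵢ)` is spanned by units. -/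
theorem exists_finite_affine_cover_spannedByUnits
    (F : Type u) [Field F] (X : Scheme.{u}) (f : X ⟶ Spec (CommRingCat.of F))
    [IsIntegral X] [IsSeparated f] [LocallyOfFiniteType f] [QuasiCompact f] :
    ∃ (n : ℕ) (U : Fin n → X.Opens),
      (⨆ i, U i) = ⊤ ∧
      ∀ i, IsAffineOpen (U i) ∧ SpannedByUnits Γ(X, U i) :=
  exists_finite_affine_cover_spannedByUnits_general F X f
end

section
/- Let k be a field, R a commutative finitely generated k-algebra, and M a finitely generated R-module. Then M is finite-dimensional as a k-vector space if and only if every prime ideal in the support of M is a maximal ideal of R. -/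
/-!
Both sides are equivalent to `R ⧸ Ann M` being finite over `k`: this ring embeds in `End_k M`,
and `M` is a finite module over it. A finite type `k`-algebra is finite over `k` exactly when it
has Krull dimension zero (Hopkins–Levitzki and the Nullstellensatz), and the primes of
`R ⧸ Ann M` are those of the support of `M`.
-/

open Module

theorem Ideal.krullDimLE_zero_quotient_iff_forall_isPrime_isMaximal {R : Type*} [CommRing R]
    {I : Ideal R} :
    Ring.KrullDimLE 0 (R ⧸ I) ↔ ∀ p : Ideal R, p.IsPrime → I ≤ p → p.IsMaximal := by
  rw [Ideal.krullDimLE_zero_quotient_iff_forall_minimalPrimes_isMaximal]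
  refine ⟨fun h p hp hIp ↦ ?_, fun h J hJ ↦ h J hJ.1.1 hJ.1.2⟩
  obtain ⟨J, hJ, hJp⟩ := Ideal.exists_minimalPrimes_le hIp
  exact (h J hJ).eq_of_le hp.ne_top hJp ▸ h J hJ

theorem Module.forall_mem_support_isMaximal_iff_krullDimLE_zero (R M : Type*) [CommRing R]
    [AddCommGroup M] [Module R M] [Module.Finite R M] :
    (∀ p ∈ support R M, p.asIdeal.IsMaximal) ↔ Ring.KrullDimLE 0 (R ⧸ annihilator R M) := by
  simp only [Ideal.krullDimLE_zero_quotient_iff_forall_isPrime_isMaximal,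
    mem_support_iff_of_finite]
  exact ⟨fun h p hp hIp ↦ h ⟨p, hp⟩ hIp, fun h p hIp ↦ h p.asIdeal p.isPrime hIp⟩

theorem Algebra.ker_lsmul_eq_annihilator (k R M : Type*) [CommSemiring k] [CommSemiring R]
    [Algebra k R] [AddCommMonoid M] [Module R M] [Module k M] [IsScalarTower k R M] :
    RingHom.ker (Algebra.lsmul k k M : R →ₐ[k] Module.End k M) = annihilator R M := by
  ext r
  simp [Module.mem_annihilator, LinearMap.ext_iff]

theorem Module.Finite.quotient_annihilator (k R M : Type*) [Field k] [CommRing R] [Algebra k R]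
    [AddCommGroup M] [Module R M] [Module k M] [IsScalarTower k R M] [Module.Finite k M] :
    Module.Finite k (R ⧸ annihilator R M) := by
  let φ : R →ₐ[k] Module.End k M := Algebra.lsmul k k M
  have : Module.Finite k (R ⧸ RingHom.ker φ) :=
    .of_injective (Ideal.kerLiftAlg φ).toLinearMap (Ideal.kerLiftAlg_injective φ)
  exact .equiv
    (Ideal.quotientEquivAlgOfEq k (Algebra.ker_lsmul_eq_annihilator k R M)).toLinearEquiv

theorem Module.Finite.of_quotient_annihilator (k R M : Type*) [CommSemiring k] [CommRing R]
    [Algebra k R] [AddCommGroup M] [Module R M] [Module k M] [IsScalarTower k R M]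
    [Module.Finite R M] [Module.Finite k (R ⧸ annihilator R M)] : Module.Finite k M := by
  let _ := Module.quotientAnnihilator (R := R) (M := M)
  have : Module.Finite (R ⧸ annihilator R M) M := .of_restrictScalars_finite R _ M
  exact .trans (R ⧸ annihilator R M) M

/-- Let `k` be a field, `R` a commutative finitely generated `k`-algebra, and `M` a finitely
generated `R`-module.  Then `M` is finite-dimensional as a `k`-vector space if and only if
every prime ideal in the support of `M` is a maximal ideal of `R`. -/
theorem finite_dimensional_iff_support_maximal
    (k : Type*) [Field k] (R : Type*) [CommRing R] [Algebra k R] [Algebra.FiniteType k R]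
    (M : Type*) [AddCommGroup M] [Module R M] [Module k M] [IsScalarTower k R M]
    [Module.Finite R M] :
    FiniteDimensional k M ↔ ∀ p ∈ Module.support R M, p.asIdeal.IsMaximal := by
  rw [forall_mem_support_isMaximal_iff_krullDimLE_zero, ← Module.finite_iff_krullDimLE_zero k]
  exact ⟨fun _ ↦ .quotient_annihilator k R M, fun _ ↦ .of_quotient_annihilator k R M⟩
end

section
/- Let p be a prime number, A a subring of ℝ with 1/p ∈ A, and n a natural number. If U is a closed additive subgroup of ℝⁿ such that a·u ∈ U for all a ∈ A and u ∈ U, then U is an ℝ-linear subspace of ℝⁿ. -/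
/-- Let `p` be a prime, `A ⊆ ℝ` a subring with `1/p ∈ A`, and `U` a closed additive
subgroup of `ℝⁿ` stable under multiplication by all scalars from `A`.  Then `U` is an
`ℝ`-linear subspace of `ℝⁿ`, i.e. it is stable under multiplication by every real scalar. -/
theorem closed_subgroup_smul_stable_is_real_subspace (p : ℕ) (hp : p.Prime)
    (A : Subring ℝ) (hA : ((p : ℝ))⁻¹ ∈ A) (n : ℕ)
    (U : AddSubgroup (Fin n → ℝ)) (hU : IsClosed (U : Set (Fin n → ℝ)))
    (hsmul : ∀ a ∈ A, ∀ u ∈ U, a • u ∈ U) :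
    ∀ (c : ℝ), ∀ u ∈ U, c • u ∈ U := by
  intro c u hu
  -- the set of scalars sending u into U
  set S : AddSubgroup ℝ :=
    { carrier := {a : ℝ | a • u ∈ U}
      zero_mem' := by simpa using U.zero_mem
      add_mem' := fun {a b} ha hb => by
        simpa [add_smul] using U.add_mem ha hb
      neg_mem' := fun {a} ha => by
        simpa [neg_smul] using U.neg_mem ha } with hS
  have hSmem : ∀ a : ℝ, a ∈ S ↔ a • u ∈ U := fun a => Iff.rfl
  have hSclosed : IsClosed (S : Set ℝ) := by
    have : Continuous fun a : ℝ => a • u := by continuity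
    exact hU.preimage this
  -- S contains p⁻ᵏ for all k
  have hpow : ∀ k : ℕ, ((p : ℝ))⁻¹ ^ k ∈ S := by
    intro k
    induction k with
    | zero => simpa [hSmem] using hu
    | succ k ih =>
      rw [hSmem] at ih ⊢
      rw [pow_succ, mul_comm, mul_smul]
      exact hsmul _ hA _ ih
  have hp1 : (1 : ℝ) < (p : ℝ) := by exact_mod_cast hp.one_lt
  have hp0 : (0 : ℝ) < (p : ℝ) := lt_trans one_pos hp1
  -- S is dense
  have hdense : Dense (S : Set ℝ) := by
    rcases S.dense_or_cyclic with h | ⟨a, ha⟩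
    · exact h
    · exfalso
      -- all p⁻ᵏ are in closure {a} = zmultiples a
      rw [← AddSubgroup.zmultiples_eq_closure] at ha
      have hane : a ≠ 0 := by
        intro h0
        have := hpow 0
        rw [ha, h0] at this
        rcases this with ⟨k, hk⟩
        simp at hk
      -- choose k with p⁻ᵏ < |a|
      obtain ⟨k, hk⟩ := exists_pow_lt_of_lt_one (abs_pos.mpr hane)
        (by rw [inv_lt_one_iff₀]; right; exact hp1)
      have hmem := hpow k
      rw [ha] at hmem
      rcases hmem with ⟨m, hm⟩
      have hpos : (0 : ℝ) < ((p : ℝ))⁻¹ ^ k := pow_pos (inv_pos.mpr hp0) k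
      have hm0 : m ≠ 0 := by
        intro h0
        simp only [h0, zero_zsmul] at hm
        exact absurd hm (ne_of_lt hpos)
      have : |a| ≤ |((p:ℝ))⁻¹ ^ k| := by
        rw [← hm, abs_zsmul]
        calc |a| = 1 * |a| := (one_mul _).symm
          _ ≤ (|m| : ℝ) * |a| := by
              apply mul_le_mul_of_nonneg_right _ (abs_nonneg a)
              exact_mod_cast Int.one_le_abs hm0
          _ = |m| • |a| := by simp [zsmul_eq_mul]
      rw [abs_of_pos hpos] at this
      linarith
  have : (S : Set ℝ) = Set.univ := hSclosed.closure_eq ▸ hdense.closure_eq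
  have hc : c ∈ S := by rw [← SetLike.mem_coe, this]; trivial
  exact hc
end

section
/- Let R be a commutative Noetherian ring and M a finitely generated R-module such that every prime ideal in the support of M is maximal. Then the support of M is a finite set of maximal ideals, and the canonical map from M to the product of its localizations at the primes in its support, M → ∏_{𝔭 ∈ supp M} M_𝔭, is an isomorphism of R-modules. -/
/-- Let `R` be a commutative Noetherian ring and `M` a finitely generated `R`-module all of
whose support consists of maximal ideals.  Then the support of `M` is finite, and the
canonical `R`-linear map `M → ∏_{𝔭 ∈ supp M} M_𝔭` is an isomorphism (i.e. bijective). -/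
theorem support_finite_and_localization_bijective
    (R : Type*) [CommRing R] [IsNoetherianRing R]
    (M : Type*) [AddCommGroup M] [Module R M] [Module.Finite R M]
    (h : ∀ p ∈ Module.support R M, p.asIdeal.IsMaximal) :
    (Module.support R M).Finite ∧
      Function.Bijective
        (LinearMap.pi fun p : Module.support R M =>
          LocalizedModule.mkLinearMap p.1.asIdeal.primeCompl M) := by
  classical
  set I := Module.annihilator R M with hI
  have hmem : ∀ p : PrimeSpectrum R, p ∈ Module.support R M ↔ I ≤ p.asIdeal :=
    fun p => Module.mem_support_iff_of_finite
  -- Finiteness of the support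
  have hfin : (Module.support R M).Finite := by
    have h1 : (minimalPrimes (R ⧸ I)).Finite := minimalPrimes.finite_of_isNoetherianRing _
    have h2 : I.minimalPrimes.Finite := by
      rw [Ideal.minimalPrimes_eq_comap]; exact h1.image _
    refine (h2.preimage (f := PrimeSpectrum.asIdeal)
      (fun a _ b _ hab => PrimeSpectrum.ext hab)).subset ?_
    intro q hq
    have hIq : I ≤ q.asIdeal := (hmem q).mp hq
    obtain ⟨p, hp, hpq⟩ := Ideal.exists_minimalPrimes_le hIq
    have hpprime : p.IsPrime := hp.1.1
    have hpsupp : (⟨p, hpprime⟩ : PrimeSpectrum R) ∈ Module.support R M :=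
      (hmem _).mpr hp.1.2
    have : p = q.asIdeal := (h _ hpsupp).eq_of_le q.isPrime.ne_top hpq
    exact Set.mem_preimage.mpr (this ▸ hp)
  -- set up a uniform power `N` with `(∏ supp)^N ≤ ann M`
  obtain ⟨n, hn⟩ := Ideal.exists_radical_pow_le_of_fg I (IsNoetherian.noetherian _)
  set N : ℕ := n + 1 with hNdef
  have hN0 : N ≠ 0 := Nat.succ_ne_zero n
  have hprod_rad : (∏ q ∈ hfin.toFinset, q.asIdeal) ≤ I.radical := by
    rw [Ideal.radical_eq_sInf]
    refine le_sInf ?_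
    rintro J ⟨hIJ, hJp⟩
    have hJs : (⟨J, hJp⟩ : PrimeSpectrum R) ∈ Module.support R M := (hmem _).mpr hIJ
    exact le_trans Ideal.prod_le_inf (Finset.inf_le (hfin.mem_toFinset.mpr hJs))
  have hs_prod : (∏ q ∈ hfin.toFinset, q.asIdeal) ^ N ≤ I :=
    le_trans (Ideal.pow_right_mono hprod_rad N)
      (le_trans (Ideal.pow_le_pow_right (Nat.le_succ n)) hn)
  -- key lemma: `p^N` annihilates `M_p` for `p` in the support
  have key : ∀ (p : PrimeSpectrum R), p ∈ Module.support R M →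
      ∀ j ∈ p.asIdeal ^ N, ∀ y : LocalizedModule p.asIdeal.primeCompl M, j • y = 0 := by
    intro p hp j hj y
    have hchoice : ∀ q ∈ hfin.toFinset.erase p, ∃ a, a ∈ q.asIdeal ∧ a ∉ p.asIdeal := by
      intro q hq
      obtain ⟨hqp, hqs⟩ := Finset.mem_erase.mp hq
      by_contra hcon
      push_neg at hcon
      have hle : q.asIdeal ≤ p.asIdeal := fun a ha => hcon a ha
      exact hqp (PrimeSpectrum.ext
        ((h q (hfin.mem_toFinset.mp hqs)).eq_of_le p.isPrime.ne_top hle))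
    choose a ha hna using hchoice
    set u : R := ∏ q ∈ (hfin.toFinset.erase p).attach, a q.1 q.2 with hu
    have hu_compl : u ∈ p.asIdeal.primeCompl :=
      Submonoid.prod_mem _ (fun q _ => hna q.1 q.2)
    have hu_mem : u ∈ ∏ q ∈ hfin.toFinset.erase p, q.asIdeal := by
      have : u ∈ ∏ q ∈ (hfin.toFinset.erase p).attach, q.1.asIdeal :=
        Ideal.prod_mem_prod (fun q _ => ha q.1 q.2)
      rwa [Finset.prod_attach (hfin.toFinset.erase p) (fun q => q.asIdeal)] at this
    have h1 : u ^ N * j ∈ I := by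
      have h2 : u ^ N ∈ (∏ q ∈ hfin.toFinset.erase p, q.asIdeal) ^ N :=
        Ideal.pow_mem_pow hu_mem N
      have h3 : u ^ N * j ∈
          ((∏ q ∈ hfin.toFinset.erase p, q.asIdeal) * p.asIdeal) ^ N := by
        rw [mul_pow]
        exact Ideal.mul_mem_mul h2 hj
      have h4 : (∏ q ∈ hfin.toFinset.erase p, q.asIdeal) * p.asIdeal
          = ∏ q ∈ hfin.toFinset, q.asIdeal :=
        Finset.prod_erase_mul _ _ (hfin.mem_toFinset.mpr hp)
      exact hs_prod (h4 ▸ h3)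
    induction y using LocalizedModule.induction_on with
    | _ m t =>
      rw [LocalizedModule.smul'_mk,
        show (0 : LocalizedModule p.asIdeal.primeCompl M) = LocalizedModule.mk 0 t from
          (LocalizedModule.zero_mk t).symm, LocalizedModule.mk_eq]
      refine ⟨⟨u ^ N, pow_mem hu_compl N⟩, ?_⟩
      have hann : (u ^ N * j) • m = 0 := Module.mem_annihilator.mp h1 m
      show (u ^ N) • (t : R) • (j • m) = (u ^ N) • (t : R) • (0 : M)
      rw [smul_zero, smul_zero, smul_comm, ← mul_smul (u ^ N) j m, hann, smul_zero]
  refine ⟨hfin, ?_, ?_⟩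
  · -- injectivity
    intro m m' he
    refine Module.eq_of_localization_maximal (R := R) (M := M)
      (fun P _ => LocalizedModule P.primeCompl M)
      (fun P _ => LocalizedModule.mkLinearMap P.primeCompl M) m m' (fun P hP => ?_)
    by_cases hsup : (⟨P, hP.isPrime⟩ : PrimeSpectrum R) ∈ Module.support R M
    · exact congrFun he ⟨⟨P, hP.isPrime⟩, hsup⟩
    · haveI := Module.notMem_support_iff.mp hsup
      exact Subsingleton.elim _ _
  · -- surjectivity
    haveI : Fintype (Module.support R M) := hfin.fintype
    intro x
    have single : ∀ (p : Module.support R M)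
        (y : LocalizedModule p.1.asIdeal.primeCompl M),
        ∃ m : M, (LocalizedModule.mk m 1 : LocalizedModule p.1.asIdeal.primeCompl M) = y ∧
          ∀ q : Module.support R M, q ≠ p →
            (LocalizedModule.mk m 1 : LocalizedModule q.1.asIdeal.primeCompl M) = 0 := by
      intro p y
      induction y using LocalizedModule.induction_on with
      | _ m₀ t =>
        set K : Ideal R := ∏ q ∈ hfin.toFinset.erase p.1, q.asIdeal ^ N with hK
        have hcomax : Ideal.span {(t : R)} * K ⊔ p.1.asIdeal ^ N = ⊤ := by
          by_contra hne
          obtain ⟨m, hm, hle⟩ := Ideal.exists_le_maximal _ hne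
          haveI := hm.isPrime
          have h1 : p.1.asIdeal ^ N ≤ m := le_trans le_sup_right hle
          have h2 : p.1.asIdeal ≤ m := (Ideal.IsPrime.pow_le_iff hN0).mp h1
          have h3 : p.1.asIdeal = m := (h p.1 p.2).eq_of_le hm.ne_top h2
          have h4 : Ideal.span {(t : R)} * K ≤ m := le_trans le_sup_left hle
          rcases hm.isPrime.mul_le.mp h4 with h5 | h5
          · have htm : (t : R) ∈ m := h5 (Ideal.mem_span_singleton_self _)
            rw [← h3] at htm
            exact t.2 htm
          · obtain ⟨q, hq, hq2⟩ := hm.isPrime.prod_le.mp h5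
            have hq3 : q.asIdeal ≤ m := (Ideal.IsPrime.pow_le_iff hN0).mp hq2
            have hq4 : q ∈ Module.support R M :=
              hfin.mem_toFinset.mp (Finset.mem_of_mem_erase hq)
            have hq5 : q.asIdeal = m := (h q hq4).eq_of_le hm.ne_top hq3
            exact (Finset.mem_erase.mp hq).1 (PrimeSpectrum.ext (hq5.trans h3.symm))
        obtain ⟨c, hc, j, hj, hcj⟩ :=
          Submodule.mem_sup.mp ((Ideal.eq_top_iff_one _).mp hcomax)
        obtain ⟨k, hk, hck⟩ := Ideal.mem_span_singleton_mul.mp hc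
        refine ⟨k • m₀, ?_, ?_⟩
        · have e1 : ((t : R) • (LocalizedModule.mk m₀ t :
              LocalizedModule p.1.asIdeal.primeCompl M)) = LocalizedModule.mk m₀ 1 := by
            rw [LocalizedModule.smul'_mk, ← Submonoid.smul_def,
              LocalizedModule.mk_cancel]
          have e2 : (LocalizedModule.mk (k • m₀) 1 :
              LocalizedModule p.1.asIdeal.primeCompl M)
              = (k * (t : R)) • LocalizedModule.mk m₀ t := by
            rw [mul_smul, e1, LocalizedModule.smul'_mk]
          have hkt : k * (t : R) = 1 - j := by
            linear_combination hck + hcj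
          rw [e2, hkt, sub_smul, one_smul,
            key p.1 p.2 j hj (LocalizedModule.mk m₀ t), sub_zero]
        · intro q hq
          have hqK : k ∈ q.1.asIdeal ^ N := by
            have hqe : q.1 ∈ hfin.toFinset.erase p.1 :=
              Finset.mem_erase.mpr ⟨fun e => hq (Subtype.ext e), hfin.mem_toFinset.mpr q.2⟩
            exact (le_trans Ideal.prod_le_inf (Finset.inf_le hqe)) hk
          have e3 : (LocalizedModule.mk (k • m₀) 1 :
              LocalizedModule q.1.asIdeal.primeCompl M)
              = k • LocalizedModule.mk m₀ 1 := by
            rw [LocalizedModule.smul'_mk]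
          rw [e3, key q.1 q.2 k hqK]
    choose g hg1 hg2 using fun p => single p (x p)
    refine ⟨∑ p : Module.support R M, g p, funext fun q => ?_⟩
    have e4 : (LinearMap.pi fun p : Module.support R M =>
        LocalizedModule.mkLinearMap p.1.asIdeal.primeCompl M)
        (∑ p : Module.support R M, g p) q
        = ∑ p : Module.support R M,
          (LocalizedModule.mk (g p) 1 : LocalizedModule q.1.asIdeal.primeCompl M) := by
      simp [LinearMap.pi_apply, map_sum, LocalizedModule.mkLinearMap_apply]
    rw [e4, Finset.sum_eq_single q (fun p _ hp => hg2 p q (fun e => hp e.symm))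
      (fun hq => absurd (Finset.mem_univ q) hq)]
    exact hg1 q
end
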